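/- Let Q and distributions P^1,…,P^M over X be given, with non-negative coefficients φ_1,…,φ_M summing to 1. Let O be a set of distributions S over X such that d_{HΔH}(Σ_i φ_i P^i, S) ≤ max_{i,j} d_{HΔH}(P^i, P^j) for every S ∈ O. Then for any h ∈ H, ε_Q(h) ≤ λ' + Σ_i φ_i ε_{P^i}(h) + (1/2) min_{S∈O} d_{HΔH}(S, Q) + (1/2) max_{i,j} d_{HΔH}(P^i, P^j), where λ' is the sum of errors of ideal joint hypotheses appearing in the two applications of the single-source bound. -/

import Mathlib

open MeasureTheory
open scoped NNReal ENNReal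

/-- Error of a binary hypothesis `h` on a distribution `D` over `X` with
labeling function `f`. -/
noncomputable def err {X : Type*} [MeasurableSpace X] (D : Measure X)
    (f h : X → Bool) : ℝ :=
  (D {x | h x ≠ f x}).toReal

/-- The `HΔH`-divergence between two distributions `P` and `Q` over `X`. -/
noncomputable def dHDH {X : Type*} [MeasurableSpace X] (H : Set (X → Bool))
    (P Q : Measure X) : ℝ :=
  2 * sSup {r : ℝ | ∃ h ∈ H, ∃ h' ∈ H,
    r = |(P {x | h x ≠ h' x}).toReal - (Q {x | h x ≠ h' x}).toReal|}

/-- The error of the ideal joint hypothesis for distributions `P` and `Q`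
with (shared) labeling function `f`. -/
noncomputable def idealJointError {X : Type*} [MeasurableSpace X]
    (H : Set (X → Bool)) (P Q : Measure X) (f : X → Bool) : ℝ :=
  sInf {r : ℝ | ∃ h ∈ H, r = err P f h + err Q f h}

/-!
Chain the single-source bound through an intermediate distribution `S ∈ O`: from the
mixture `∑ φ i • P i` to `S`, then from `S` to `Q`. The error on the mixture is the
`φ`-average of the source errors, the divergence from the mixture to `S` is at most the
largest pairwise source divergence by assumption, and minimizing over `S` gives the bound.
-/

section Disagreement

variable {X : Type*} [MeasurableSpace X]

lemma measureReal_setOf_ne_le {β : Type*} (μ : Measure X) [IsFiniteMeasure μ]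
    (g₁ g₂ g₃ : X → β) :
    μ.real {x | g₁ x ≠ g₃ x} ≤ μ.real {x | g₁ x ≠ g₂ x} + μ.real {x | g₂ x ≠ g₃ x} := by
  refine (measureReal_mono fun x hx => ?_).trans (measureReal_union_le _ _)
  simp only [Set.mem_union, Set.mem_ofPred_eq]
  by_contra! h
  exact hx (h.1.trans h.2)

lemma err_le_measureReal_setOf_ne_add_err (D : Measure X) [IsFiniteMeasure D]
    (f h h' : X → Bool) : err D f h ≤ D.real {x | h x ≠ h' x} + err D f h' :=
  measureReal_setOf_ne_le D h h' f

lemma measureReal_setOf_ne_le_err_add_err (D : Measure X) [IsFiniteMeasure D]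
    (f h h' : X → Bool) : D.real {x | h x ≠ h' x} ≤ err D f h + err D f h' := by
  have := measureReal_setOf_ne_le D h f h'
  simp only [ne_comm (a := f _)] at this
  exact this

lemma abs_sub_measureReal_setOf_ne_le_dHDH (H : Set (X → Bool)) (P Q : Measure X)
    [IsProbabilityMeasure P] [IsProbabilityMeasure Q] {h h' : X → Bool}
    (hh : h ∈ H) (hh' : h' ∈ H) :
    |P.real {x | h x ≠ h' x} - Q.real {x | h x ≠ h' x}| ≤ dHDH H P Q / 2 := by
  have hbdd : BddAbove {r : ℝ | ∃ h ∈ H, ∃ h' ∈ H,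
      r = |(P {x | h x ≠ h' x}).toReal - (Q {x | h x ≠ h' x}).toReal|} := by
    refine ⟨1, ?_⟩
    rintro _ ⟨g, -, g', -, rfl⟩
    exact abs_sub_le_of_nonneg_of_le measureReal_nonneg measureReal_le_one
      measureReal_nonneg measureReal_le_one
  rw [dHDH, mul_div_cancel_left₀ _ two_ne_zero]
  exact le_csSup hbdd ⟨h, hh, h', hh', rfl⟩

end Disagreement

section SingleSource

variable {X : Type*} [MeasurableSpace X] (H : Set (X → Bool)) (P Q : Measure X)
  [IsProbabilityMeasure P] [IsProbabilityMeasure Q] (f : X → Bool)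

theorem err_le_idealJointError_add_err_add_dHDH {h : X → Bool} (hh : h ∈ H) :
    err Q f h ≤ idealJointError H P Q f + err P f h + (1 / 2) * dHDH H P Q := by
  suffices err Q f h - err P f h - dHDH H P Q / 2 ≤ idealJointError H P Q f by linarith
  refine le_csInf ⟨_, h, hh, rfl⟩ ?_
  rintro _ ⟨h', hh', rfl⟩
  have hdiv := (abs_sub_le_iff.1 (abs_sub_measureReal_setOf_ne_le_dHDH H P Q hh hh')).2
  calc err Q f h - err P f h - dHDH H P Q / 2
      ≤ Q.real {x | h x ≠ h' x} + err Q f h' - err P f h - dHDH H P Q / 2 := by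
        linarith [err_le_measureReal_setOf_ne_add_err Q f h h']
    _ ≤ P.real {x | h x ≠ h' x} + err Q f h' - err P f h := by linarith
    _ ≤ err P f h' + err Q f h' := by
        linarith [measureReal_setOf_ne_le_err_add_err P f h h']

lemma idealJointError_le_two : idealJointError H P Q f ≤ 2 := by
  rcases H.eq_empty_or_nonempty with rfl | ⟨h, hh⟩
  · simp [idealJointError]
  have hbdd : BddBelow {r : ℝ | ∃ h ∈ H, r = err P f h + err Q f h} := by
    refine ⟨0, ?_⟩
    rintro _ ⟨h', -, rfl⟩
    exact add_nonneg measureReal_nonneg measureReal_nonneg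
  calc idealJointError H P Q f ≤ err P f h + err Q f h := csInf_le hbdd ⟨h, hh, rfl⟩
    _ ≤ 1 + 1 := add_le_add measureReal_le_one measureReal_le_one
    _ = 2 := one_add_one_eq_two

end SingleSource

section Mixture

variable {X ι : Type*} [MeasurableSpace X] [Fintype ι] (P : ι → Measure X) (φ : ι → ℝ≥0)

lemma isProbabilityMeasure_sum_smul [∀ i, IsProbabilityMeasure (P i)] (hφ : ∑ i, φ i = 1) :
    IsProbabilityMeasure (∑ i, (φ i : ℝ≥0∞) • P i) := by
  constructor
  simp only [Measure.finsetSum_apply, Measure.smul_apply, smul_eq_mul, measure_univ, mul_one]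
  exact_mod_cast hφ

lemma err_sum_smul [∀ i, IsFiniteMeasure (P i)] (f h : X → Bool) :
    err (∑ i, (φ i : ℝ≥0∞) • P i) f h = ∑ i, (φ i : ℝ) * err (P i) f h := by
  simp only [err, Measure.finsetSum_apply, Measure.smul_apply, smul_eq_mul]
  rw [ENNReal.toReal_sum fun i _ => ENNReal.mul_ne_top ENNReal.coe_ne_top (measure_ne_top _ _)]
  simp only [ENNReal.toReal_mul, ENNReal.coe_toReal]

end Mixture

theorem multi_source_dg_bound_general {X : Type*} [MeasurableSpace X]
    (H : Set (X → Bool)) {M : ℕ}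
    (P : Fin M → Measure X) [∀ i, IsProbabilityMeasure (P i)]
    (Q : Measure X) [IsProbabilityMeasure Q]
    (f : X → Bool)
    (φ : Fin M → ℝ≥0) (hφ : ∑ i, φ i = 1)
    (O : Set (Measure X)) (hOne : O.Nonempty)
    (hOprob : ∀ S ∈ O, IsProbabilityMeasure S)
    (hO : ∀ S ∈ O,
      dHDH H (∑ i, (φ i : ℝ≥0∞) • P i) S ≤
        ⨆ p : Fin M × Fin M, dHDH H (P p.1) (P p.2))
    (lam' : ℝ)
    (hlam' : lam' = sSup {r : ℝ | ∃ S ∈ O,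
      r = idealJointError H S Q f
        + idealJointError H (∑ i, (φ i : ℝ≥0∞) • P i) S f}) :
    ∀ h ∈ H, err Q f h ≤
      lam' + ∑ i, (φ i : ℝ) * err (P i) f h
        + (1 / 2) * sInf {r : ℝ | ∃ S ∈ O, r = dHDH H S Q}
        + (1 / 2) * ⨆ p : Fin M × Fin M, dHDH H (P p.1) (P p.2) := by
  intro h hh
  set Pφ := ∑ i, (φ i : ℝ≥0∞) • P i
  set dmax := ⨆ p : Fin M × Fin M, dHDH H (P p.1) (P p.2)
  have : IsProbabilityMeasure Pφ := isProbabilityMeasure_sum_smul P φ hφ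
  have hlam : ∀ S ∈ O, idealJointError H S Q f + idealJointError H Pφ S f ≤ lam' := by
    intro S hS
    refine hlam' ▸ le_csSup ⟨4, ?_⟩ ⟨S, hS, rfl⟩
    rintro _ ⟨S', hS', rfl⟩
    have := hOprob S' hS'
    linarith [idealJointError_le_two H S' Q f, idealJointError_le_two H Pφ S' f]
  suffices 2 * (err Q f h - lam' - ∑ i, (φ i : ℝ) * err (P i) f h - dmax / 2) ≤
      sInf {r : ℝ | ∃ S ∈ O, r = dHDH H S Q} by linarith
  obtain ⟨S₀, hS₀⟩ := hOne
  refine le_csInf ⟨_, S₀, hS₀, rfl⟩ ?_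
  rintro _ ⟨S, hS, rfl⟩
  have := hOprob S hS
  have hSQ := err_le_idealJointError_add_err_add_dHDH H S Q f hh
  have hPS := err_le_idealJointError_add_err_add_dHDH H Pφ S f hh
  rw [err_sum_smul] at hPS
  linarith [hO S hS, hlam S hS]

/-- Multi-source generalization bound.  Given sources `P i`, mixture weights
`φ`, and a set `O` of distributions each close (in `HΔH`-divergence) to the
mixture `∑ i, φ i • P i`, the target error of any `h ∈ H` is bounded by
`λ' + ∑ i φ i ε_{P i}(h) + (1/2) min_{S ∈ O} d_{HΔH}(S, Q)
 + (1/2) max_{i,j} d_{HΔH}(P i, P j)`, where `λ'` collects the errors of the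
ideal joint hypotheses arising in the two applications of the single-source
bound. -/
theorem multi_source_dg_bound {X : Type*} [MeasurableSpace X]
    (H : Set (X → Bool)) {M : ℕ} (hM : 0 < M)
    (P : Fin M → Measure X) [∀ i, IsProbabilityMeasure (P i)]
    (Q : Measure X) [IsProbabilityMeasure Q]
    (f : X → Bool)
    (φ : Fin M → ℝ≥0) (hφ : ∑ i, φ i = 1)
    (O : Set (Measure X)) (hOne : O.Nonempty)
    (hOprob : ∀ S ∈ O, IsProbabilityMeasure S)
    (hO : ∀ S ∈ O,
      dHDH H (∑ i, (φ i : ℝ≥0∞) • P i) S ≤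
        ⨆ p : Fin M × Fin M, dHDH H (P p.1) (P p.2))
    (lam' : ℝ)
    (hlam' : lam' = sSup {r : ℝ | ∃ S ∈ O,
      r = idealJointError H S Q f
        + idealJointError H (∑ i, (φ i : ℝ≥0∞) • P i) S f}) :
    ∀ h ∈ H, err Q f h ≤
      lam' + ∑ i, (φ i : ℝ) * err (P i) f h
        + (1 / 2) * sInf {r : ℝ | ∃ S ∈ O, r = dHDH H S Q}
        + (1 / 2) * ⨆ p : Fin M × Fin M, dHDH H (P p.1) (P p.2) :=
  multi_source_dg_bound_general H P Q f φ hφ O hOne hOprob hO lam' hlam'
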